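/- For real x and y with x,y>0, the double integral ∫₀^∞ ∫₀^∞ (1/(√x √y)) · exp(−(x² + 4xy + y²)/(4y)) · log(x/y) dx dy equals −2√2 · π · arccosh(2). -/

import Mathlib

/-!
Substituting `y = x u²` turns the inner integral into `∫₀^∞ -4 log u · exp (-q(u) x) du` with
`q(u) = (u⁴ + 4u² + 1) / (4u²)`; integrating in `x` first leaves
`-16 ∫₀^∞ u² log u / (u⁴ + 4u² + 1) du`. The quartic factors as `(u² + a²)(u² + b²)` with
`a, b = (√6 ∓ √2) / 2`, so `ab = 1`, `b - a = √2` and `b² = 2 + √3`, and partial fractions reduce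
everything to `∫₀^∞ log u / (u² + c²) du = π log c / (2c)`. That integral follows by scaling
`u = c v` from `∫₀^∞ log u / (u² + 1) du = 0`, which holds because `u ↦ 1/u` negates it.
-/

open Real MeasureTheory Set

lemma integrableOn_log_div_sq_add_sq {c : ℝ} (hc : 0 < c) :
    IntegrableOn (fun u : ℝ => log u / (u ^ 2 + c ^ 2)) (Ioi 0) := by
  have hmeas : AEStronglyMeasurable (fun u : ℝ => log u / (u ^ 2 + c ^ 2)) volume :=
    (by fun_prop : Measurable fun u : ℝ => log u / (u ^ 2 + c ^ 2)).aestronglyMeasurable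
  rw [← Ioc_union_Ioi_eq_Ioi zero_le_one]
  refine IntegrableOn.union ?_ ?_
  · have hlog : IntegrableOn log (Ioc 0 1) :=
      (intervalIntegrable_iff_integrableOn_Ioc_of_le zero_le_one).1
        intervalIntegral.intervalIntegrable_log'
    refine (hlog.norm.div_const (c ^ 2)).mono' hmeas.restrict ?_
    filter_upwards [ae_restrict_mem measurableSet_Ioc] with u _
    rw [norm_div, Real.norm_of_nonneg (by positivity : 0 ≤ u ^ 2 + c ^ 2)]
    exact div_le_div_of_nonneg_left (norm_nonneg _) (by positivity) (by nlinarith)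
  · have hrpow := integrableOn_Ioi_rpow_of_lt (by norm_num : (-3 / 2 : ℝ) < -1) one_pos
    refine (hrpow.const_mul 2).mono' hmeas.restrict ?_
    filter_upwards [ae_restrict_mem measurableSet_Ioi] with u (hu : 1 < u)
    have hu0 : 0 < u := one_pos.trans hu
    have hlog : log u ≤ 2 * u ^ (1 / 2 : ℝ) := by
      simpa [div_eq_mul_inv, mul_comm] using log_le_rpow_div hu0.le (one_half_pos : (0:ℝ) < 1 / 2)
    have hpow : u ^ (1 / 2 : ℝ) = u ^ (-3 / 2 : ℝ) * u ^ 2 := by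
      rw [← rpow_natCast, ← rpow_add hu0]; norm_num
    rw [norm_div, Real.norm_of_nonneg (log_nonneg hu.le),
      Real.norm_of_nonneg (by positivity : 0 ≤ u ^ 2 + c ^ 2), div_le_iff₀ (by positivity)]
    have : 0 ≤ u ^ (-3 / 2 : ℝ) := by positivity
    nlinarith [mul_nonneg this (sq_nonneg c)]

lemma integral_log_div_sq_add_one : ∫ u in Ioi (0:ℝ), log u / (u ^ 2 + 1) = 0 := by
  have hinv := integral_comp_rpow_Ioi (fun u : ℝ => log u / (u ^ 2 + 1)) (p := -1) (by norm_num)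
  have hodd : ∫ x in Ioi (0:ℝ),
      (|(-1:ℝ)| * x ^ ((-1:ℝ) - 1)) • (log (x ^ (-1:ℝ)) / ((x ^ (-1:ℝ)) ^ 2 + 1))
        = ∫ x in Ioi (0:ℝ), -(log x / (x ^ 2 + 1)) := by
    refine setIntegral_congr_fun measurableSet_Ioi fun x (hx : 0 < x) => ?_
    rw [show (-1:ℝ) - 1 = -2 by norm_num, rpow_neg hx.le, rpow_two, rpow_neg_one, log_inv,
      abs_neg, abs_one, smul_eq_mul]
    have : x ≠ 0 := hx.ne'
    field_simp
    ring
  rw [hodd, integral_neg] at hinv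
  linarith

lemma integral_log_div_sq_add_sq {c : ℝ} (hc : 0 < c) :
    ∫ u in Ioi (0:ℝ), log u / (u ^ 2 + c ^ 2) = π * log c / (2 * c) := by
  have hscale := integral_comp_mul_left_Ioi (fun u : ℝ => log u / (u ^ 2 + c ^ 2)) 0 hc
  rw [mul_zero, smul_eq_mul] at hscale
  have hsplit : ∫ v in Ioi (0:ℝ), log (c * v) / ((c * v) ^ 2 + c ^ 2)
      = ∫ v in Ioi (0:ℝ), (c ^ 2)⁻¹ * (log c * (1 + v ^ 2)⁻¹ + log v / (v ^ 2 + 1)) := by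
    refine setIntegral_congr_fun measurableSet_Ioi fun v (hv : 0 < v) => ?_
    rw [log_mul hc.ne' hv.ne']
    field_simp
    ring
  rw [hsplit, integral_const_mul, integral_add
      (integrable_inv_one_add_sq.integrableOn.const_mul _)
      (by simpa using (integrableOn_log_div_sq_add_sq one_pos).integrable),
    integral_const_mul, integral_Ioi_inv_one_add_sq, arctan_zero,
    integral_log_div_sq_add_one] at hscale
  field_simp at hscale ⊢
  linarith

lemma integrableOn_sq_mul_log_div_mul (a : ℝ) {b : ℝ} (hb : 0 < b) :
    IntegrableOn (fun u : ℝ => u ^ 2 * log u / ((u ^ 2 + a ^ 2) * (u ^ 2 + b ^ 2))) (Ioi 0) := by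
  have hmeas : Measurable fun u : ℝ => u ^ 2 * log u / ((u ^ 2 + a ^ 2) * (u ^ 2 + b ^ 2)) := by
    fun_prop
  refine Integrable.mono (integrableOn_log_div_sq_add_sq hb) hmeas.aestronglyMeasurable
    (ae_of_all _ fun u => ?_)
  rw [norm_div, norm_div, norm_mul, norm_mul, mul_div_mul_comm, Real.norm_of_nonneg (sq_nonneg u),
    Real.norm_of_nonneg (by positivity : 0 ≤ u ^ 2 + a ^ 2)]
  refine mul_le_of_le_one_left (by positivity) (div_le_one_of_le₀ (by nlinarith) (by positivity))

lemma integral_sq_mul_log_div_mul {a b : ℝ} (ha : 0 < a) (hb : 0 < b) (hab : a ≠ b) :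
    ∫ u in Ioi (0:ℝ), u ^ 2 * log u / ((u ^ 2 + a ^ 2) * (u ^ 2 + b ^ 2))
      = π * (b * log b - a * log a) / (2 * (b ^ 2 - a ^ 2)) := by
  have hab2 : b ^ 2 - a ^ 2 ≠ 0 := fun h =>
    hab ((pow_left_inj₀ ha.le hb.le two_ne_zero).1 (by linarith))
  have hpartial : (fun u : ℝ => u ^ 2 * log u / ((u ^ 2 + a ^ 2) * (u ^ 2 + b ^ 2))) = fun u =>
      (b ^ 2 - a ^ 2)⁻¹ *
        (b ^ 2 * (log u / (u ^ 2 + b ^ 2)) - a ^ 2 * (log u / (u ^ 2 + a ^ 2))) := by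
    ext u
    have : u ^ 2 + a ^ 2 ≠ 0 := by positivity
    have : u ^ 2 + b ^ 2 ≠ 0 := by positivity
    field_simp
    ring
  rw [hpartial, integral_const_mul, integral_sub ((integrableOn_log_div_sq_add_sq hb).const_mul _)
    ((integrableOn_log_div_sq_add_sq ha).const_mul _), integral_const_mul, integral_const_mul,
    integral_log_div_sq_add_sq ha, integral_log_div_sq_add_sq hb]
  field_simp

lemma integral_comp_mul_sq_Ioi {E : Type*} [NormedAddCommGroup E] [NormedSpace ℝ E]
    (f : ℝ → E) {x : ℝ} (hx : 0 < x) :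
    ∫ y in Ioi 0, f y = ∫ u in Ioi 0, (2 * x * u) • f (x * u ^ 2) := by
  have hsq := integral_comp_rpow_Ioi_of_pos (g := fun s => f (x * s)) two_pos
  have hscale := integral_comp_mul_left_Ioi f 0 hx
  rw [mul_zero, ← hsq] at hscale
  rw [← (eq_inv_smul_iff₀ hx.ne').1 hscale, ← integral_smul]
  refine setIntegral_congr_fun measurableSet_Ioi fun u _ => ?_
  rw [smul_smul, rpow_two, show (2:ℝ) - 1 = 1 by norm_num, rpow_one]
  ring_nf

lemma integral_Ioi_integral_mul_exp_neg_mul {α : Type*} [MeasurableSpace α] {μ : Measure α}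
    [SFinite μ] {g q : α → ℝ} (hg : Measurable g) (hq : Measurable q)
    (hq0 : ∀ᵐ u ∂μ, 0 < q u) (hint : Integrable (fun u => g u / q u) μ) :
    ∫ x in Ioi (0:ℝ), ∫ u, g u * exp (-q u * x) ∂μ = ∫ u, g u / q u ∂μ := by
  have hlaplace (c : ℝ) {u : α} (hu : 0 < q u) :
      ∫ x in Ioi (0:ℝ), c * exp (-q u * x) = c / q u := by
    rw [integral_const_mul, integral_exp_mul_Ioi (neg_lt_zero.2 hu)]
    simp [div_eq_mul_inv]
  have hF : Integrable (Function.uncurry fun u x => g u * exp (-q u * x))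
      (μ.prod (volume.restrict (Ioi 0))) := by
    rw [integrable_prod_iff (by fun_prop)]
    constructor
    · filter_upwards [hq0] with u hu using (exp_neg_integrableOn_Ioi 0 hu).const_mul (g u)
    · refine hint.norm.congr ?_
      filter_upwards [hq0] with u hu
      simp only [Function.uncurry_apply_pair, norm_mul, Real.norm_of_nonneg (exp_pos _).le]
      rw [hlaplace _ hu, norm_div, Real.norm_of_nonneg hu.le]
  rw [← integral_integral_swap hF]
  exact integral_congr_ae (hq0.mono fun u hu => hlaplace (g u) hu)

lemma integral_Ioi_eq_integral_neg_four_mul_log_mul_exp {x : ℝ} (hx : 0 < x) :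
    ∫ y in Ioi (0:ℝ),
      1 / (√x * √y) * exp (-(x ^ 2 + 4 * x * y + y ^ 2) / (4 * y)) * log (x / y)
      = ∫ u in Ioi (0:ℝ), -4 * log u * exp (-((u ^ 4 + 4 * u ^ 2 + 1) / (4 * u ^ 2)) * x) := by
  rw [integral_comp_mul_sq_Ioi _ hx]
  refine setIntegral_congr_fun measurableSet_Ioi fun u (hu : 0 < u) => ?_
  have hsqrt : √(x * u ^ 2) = √x * u := by rw [sqrt_mul hx.le, sqrt_sq hu.le]
  have hlog : log (x / (x * u ^ 2)) = -2 * log u := by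
    rw [div_mul_cancel_left₀ hx.ne', log_inv, log_pow]; push_cast; ring
  have hexp : -(x ^ 2 + 4 * x * (x * u ^ 2) + (x * u ^ 2) ^ 2) / (4 * (x * u ^ 2))
      = -((u ^ 4 + 4 * u ^ 2 + 1) / (4 * u ^ 2)) * x := by
    field_simp
    ring
  have hsx : √x ^ 2 = x := sq_sqrt hx.le
  rw [smul_eq_mul, hsqrt, hlog, hexp]
  field_simp
  linear_combination 4 * log u * hsx

lemma sqrt_two_mul_sqrt_six : √2 * √6 = 2 * √3 := by
  rw [← sqrt_mul zero_le_two, show (2 : ℝ) * 6 = 2 ^ 2 * 3 by norm_num, sqrt_mul (by positivity),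
    sqrt_sq zero_le_two]

lemma sq_sqrt_six_sub_sqrt_two_div_two : ((√6 - √2) / 2) ^ 2 = 2 - √3 := by
  linear_combination (1 / 4 : ℝ) * (sq_sqrt (by norm_num : (0:ℝ) ≤ 6)) +
    (1 / 4 : ℝ) * (sq_sqrt (by norm_num : (0:ℝ) ≤ 2)) - (1 / 2 : ℝ) * sqrt_two_mul_sqrt_six

lemma sq_sqrt_six_add_sqrt_two_div_two : ((√6 + √2) / 2) ^ 2 = 2 + √3 := by
  linear_combination (1 / 4 : ℝ) * (sq_sqrt (by norm_num : (0:ℝ) ≤ 6)) +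
    (1 / 4 : ℝ) * (sq_sqrt (by norm_num : (0:ℝ) ≤ 2)) + (1 / 2 : ℝ) * sqrt_two_mul_sqrt_six

lemma quartic_eq_mul (u : ℝ) :
    u ^ 4 + 4 * u ^ 2 + 1
      = (u ^ 2 + ((√6 - √2) / 2) ^ 2) * (u ^ 2 + ((√6 + √2) / 2) ^ 2) := by
  rw [sq_sqrt_six_sub_sqrt_two_div_two, sq_sqrt_six_add_sqrt_two_div_two]
  linear_combination (sq_sqrt (by norm_num : (0:ℝ) ≤ 3))

lemma integrableOn_sq_mul_log_div_quartic :
    IntegrableOn (fun u : ℝ => u ^ 2 * log u / (u ^ 4 + 4 * u ^ 2 + 1)) (Ioi 0) := by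
  simp_rw [quartic_eq_mul]
  exact integrableOn_sq_mul_log_div_mul _ (by positivity)

lemma integral_sq_mul_log_div_quartic :
    ∫ u in Ioi (0:ℝ), u ^ 2 * log u / (u ^ 4 + 4 * u ^ 2 + 1)
      = π * √2 * log (2 + √3) / 8 := by
  simp_rw [quartic_eq_mul]
  have h2 : √2 ^ 2 = 2 := sq_sqrt zero_le_two
  have h6 : √6 ^ 2 = 6 := sq_sqrt (by norm_num)
  have hlt : √2 < √6 := sqrt_lt_sqrt zero_le_two (by norm_num)
  set a := (√6 - √2) / 2 with ha_def
  set b := (√6 + √2) / 2 with hb_def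
  have ha : 0 < a := by rw [ha_def]; linarith
  have hb : 0 < b := by positivity
  have hba : b - a = √2 := by rw [ha_def, hb_def]; ring
  have hab : a * b = 1 := by rw [ha_def, hb_def]; linear_combination (h6 - h2) / 4
  have hlogb : log b = log (2 + √3) / 2 := by
    rw [← sq_sqrt_six_add_sqrt_two_div_two, log_pow]; push_cast; ring
  have hloga : log a = -log b := by
    rw [← log_inv, eq_inv_of_mul_eq_one_left hab]
  have hlt_ab : a < b := by linarith [sqrt_pos.2 (zero_lt_two' ℝ)]
  rw [integral_sq_mul_log_div_mul ha hb hlt_ab.ne, hloga,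
    show b ^ 2 - a ^ 2 = (b - a) * (b + a) by ring, hba, hlogb]
  field_simp
  linear_combination -4 * log (2 + √3) * √6 * h2

theorem stmt0 :
    (∫ x in Set.Ioi (0:ℝ), ∫ y in Set.Ioi (0:ℝ),
      (1 / (Real.sqrt x * Real.sqrt y)) *
        Real.exp (-(x^2 + 4*x*y + y^2) / (4*y)) * Real.log (x/y))
    = -2 * Real.sqrt 2 * π * Real.log (2 + Real.sqrt 3) := by
  have hquotient : EqOn (fun u : ℝ => -4 * log u / ((u ^ 4 + 4 * u ^ 2 + 1) / (4 * u ^ 2)))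
      (fun u => -16 * (u ^ 2 * log u / (u ^ 4 + 4 * u ^ 2 + 1))) (Ioi 0) := by
    intro u (hu : 0 < u)
    have : u ^ 4 + 4 * u ^ 2 + 1 ≠ 0 := by positivity
    field_simp
    ring
  calc _ = ∫ x in Ioi (0:ℝ), ∫ u in Ioi (0:ℝ),
          -4 * log u * exp (-((u ^ 4 + 4 * u ^ 2 + 1) / (4 * u ^ 2)) * x) :=
        setIntegral_congr_fun measurableSet_Ioi fun _ hx =>
          integral_Ioi_eq_integral_neg_four_mul_log_mul_exp hx
    _ = ∫ u in Ioi (0:ℝ), -4 * log u / ((u ^ 4 + 4 * u ^ 2 + 1) / (4 * u ^ 2)) :=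
        integral_Ioi_integral_mul_exp_neg_mul (by fun_prop) (by fun_prop)
          ((ae_restrict_mem measurableSet_Ioi).mono fun u (hu : 0 < u) => by positivity)
          (IntegrableOn.congr_fun (integrableOn_sq_mul_log_div_quartic.const_mul (-16))
            hquotient.symm measurableSet_Ioi)
    _ = -16 * ∫ u in Ioi (0:ℝ), u ^ 2 * log u / (u ^ 4 + 4 * u ^ 2 + 1) := by
        rw [setIntegral_congr_fun measurableSet_Ioi hquotient, integral_const_mul]
    _ = _ := by
        rw [integral_sq_mul_log_div_quartic]
        ring
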